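/- arXiv:2003.10083 — 2 statements merged into one kernel-verified Lean document; each statement's English description precedes it below -/
import Mathlib

section
/- Let V_j, V_k be nonzero complex numbers, y_s ≠ 0 a complex number, y_m a complex number, z = 1/y_s, α = 1 + z·y_m, I_jk = y_s·(V_j − V_k) + y_m·V_j, S_jk = V_j·conj(I_jk), v_j = |V_j|², v_k = |V_k|², ℓ_jk = |I_jk|². Then |α|²·v_j − v_k = 2·Re(α·conj(z)·S_jk) − |z|²·ℓ_jk. -/
/-!
Ohm's law across the series impedance, with the shunt current `ym * Vj` drawn at the sending end,
rearranges to `Vk = α * Vj - z * Ijk`. Expanding `‖α Vj - z Ijk‖²` then gives the cross term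
`2 Re(α Vj · conj (z Ijk)) = 2 Re(α conj z Sjk)`, and the phase angles drop out.
-/

open ComplexConjugate

theorem Complex.sq_norm_mul_sub_mul (α V z I : ℂ) :
    ‖α * V - z * I‖ ^ 2
      = ‖α‖ ^ 2 * ‖V‖ ^ 2 - 2 * (α * conj z * (V * conj I)).re + ‖z‖ ^ 2 * ‖I‖ ^ 2 := by
  have hcross : α * V * conj (z * I) = α * conj z * (V * conj I) := by
    rw [map_mul]; ring
  simp only [Complex.sq_norm, Complex.normSq_sub, Complex.normSq_mul, hcross]
  ring

theorem receiving_voltage_eq_of_shunt {Vj Vk ys ym : ℂ} (hys : ys ≠ 0) :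
    Vk = (1 + 1 / ys * ym) * Vj - 1 / ys * (ys * (Vj - Vk) + ym * Vj) := by
  field_simp
  ring

theorem stmt_4_general (Vj Vk ys ym : ℂ) (hys : ys ≠ 0)
    (z : ℂ) (hz : z = 1 / ys)
    (α : ℂ) (hα : α = 1 + z * ym)
    (Ijk : ℂ) (hI : Ijk = ys * (Vj - Vk) + ym * Vj)
    (Sjk : ℂ) (hSdef : Sjk = Vj * (starRingEnd ℂ) Ijk)
    (vj vk ljk : ℝ)
    (hvj : vj = ‖Vj‖ ^ 2) (hvk : vk = ‖Vk‖ ^ 2)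
    (hl : ljk = ‖Ijk‖ ^ 2) :
    ‖α‖ ^ 2 * vj - vk
      = 2 * (α * (starRingEnd ℂ) z * Sjk).re - ‖z‖ ^ 2 * ljk := by
  have hVk : Vk = α * Vj - z * Ijk := by
    subst hz hα hI
    exact receiving_voltage_eq_of_shunt hys
  rw [hvj, hvk, hl, hSdef, hVk, Complex.sq_norm_mul_sub_mul]
  ring

theorem stmt_4 (Vj Vk ys ym : ℂ) (hVj : Vj ≠ 0) (hVk : Vk ≠ 0) (hys : ys ≠ 0)
    (z : ℂ) (hz : z = 1 / ys)
    (α : ℂ) (hα : α = 1 + z * ym)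
    (Ijk : ℂ) (hI : Ijk = ys * (Vj - Vk) + ym * Vj)
    (Sjk : ℂ) (hSdef : Sjk = Vj * (starRingEnd ℂ) Ijk)
    (vj vk ljk : ℝ)
    (hvj : vj = ‖Vj‖ ^ 2) (hvk : vk = ‖Vk‖ ^ 2)
    (hl : ljk = ‖Ijk‖ ^ 2) :
    ‖α‖ ^ 2 * vj - vk
      = 2 * (α * (starRingEnd ℂ) z * Sjk).re - ‖z‖ ^ 2 * ljk :=
  stmt_4_general Vj Vk ys ym hys z hz α hα Ijk hI Sjk hSdef vj vk ljk hvj hvk hl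
end

section
/- Let v_j, v_k be positive reals, θ_j, θ_k reals, α, z, S complex with z ≠ 0, and define y = 1/z, V_j = √v_j·exp(i·θ_j), V_k = √v_k·exp(i·θ_k), and let y_m be the complex number with α = 1 + z·y_m. Suppose conj(α)·v_j − conj(z)·S = √(v_j·v_k)·exp(i·(θ_j − θ_k)). Then V_j·conj( y·(V_j − V_k) + y_m·V_j ) = S. -/
theorem stmt_6 (vj vk : ℝ) (hvj : 0 < vj) (hvk : 0 < vk)
    (θj θk : ℝ) (α z S : ℂ) (hz : z ≠ 0)
    (y : ℂ) (hy : y = 1 / z)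
    (Vj : ℂ) (hVj : Vj = (Real.sqrt vj : ℂ) * Complex.exp (Complex.I * θj))
    (Vk : ℂ) (hVk : Vk = (Real.sqrt vk : ℂ) * Complex.exp (Complex.I * θk))
    (ym : ℂ) (hα : α = 1 + z * ym)
    (hpolar : (starRingEnd ℂ) α * (vj : ℂ) - (starRingEnd ℂ) z * S
        = (Real.sqrt (vj * vk) : ℂ) * Complex.exp (Complex.I * ((θj : ℂ) - θk))) :
    Vj * (starRingEnd ℂ) (y * (Vj - Vk) + ym * Vj) = S := by
  have hzc : (starRingEnd ℂ) z ≠ 0 := by simpa using hz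
  have hconjexp : ∀ θ : ℝ, (starRingEnd ℂ) (Complex.exp (Complex.I * θ))
      = Complex.exp (-(Complex.I * θ)) := by
    intro θ
    rw [← Complex.exp_conj]
    simp [Complex.ext_iff]
  have hVjVj : Vj * (starRingEnd ℂ) Vj = (vj : ℂ) := by
    rw [hVj]
    simp only [map_mul, Complex.conj_ofReal, hconjexp]
    rw [mul_mul_mul_comm, ← Complex.exp_add]
    simp [← Complex.ofReal_mul, Real.mul_self_sqrt hvj.le]
  have hVjVk : Vj * (starRingEnd ℂ) Vk
      = (Real.sqrt (vj * vk) : ℂ) * Complex.exp (Complex.I * ((θj : ℂ) - θk)) := by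
    rw [hVj, hVk]
    simp only [map_mul, Complex.conj_ofReal, hconjexp]
    rw [Real.sqrt_mul hvj.le, Complex.ofReal_mul]
    rw [show ((Real.sqrt vj : ℂ) * Complex.exp (Complex.I * θj)) *
        ((Real.sqrt vk : ℂ) * Complex.exp (-(Complex.I * θk)))
        = (Real.sqrt vj : ℂ) * (Real.sqrt vk : ℂ) *
          (Complex.exp (Complex.I * θj) * Complex.exp (-(Complex.I * θk))) by ring,
      ← Complex.exp_add]
    ring_nf
  have key : Vj * (starRingEnd ℂ) (y * (Vj - Vk) + ym * Vj)
      = (starRingEnd ℂ) y * ((vj : ℂ) - Vj * (starRingEnd ℂ) Vk)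
        + (starRingEnd ℂ) ym * (vj : ℂ) := by
    simp only [map_add, map_mul, map_sub, ← hVjVj]; ring
  rw [key, hVjVk, ← hpolar, hy, hα]
  simp only [map_add, map_mul, map_one, map_div₀]
  field_simp
  ring
end
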